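/- arXiv:2507.01514 — 6 statements merged into one kernel-verified Lean document; each statement's English description precedes it below -/
import Mathlib

section
/- Let G be a Lie algebra over a field F and let f, g : G → G be linear maps satisfying f([a,b]) = [f(a),b] + [a,f(b)] - [a,g(b)] for all a,b ∈ G. Fix s ∈ G and define {a,b} := [a,b] + g(a) + f(b-a) + s. Then the affine Jacobi identity holds: {a,{b,c}} - {a,{a,a}} + {b,{c,a}} - {b,{b,b}} + {c,{a,b}} = {c,{c,c}} for all a,b,c ∈ G. -/
/-!
Expanding `{a,{b,c}} - {a,{a,a}}` leaves `[a,[b,c]] + [a,g b] + [a,f(c-b)] + f[b,c] + f(g b - g a) + f(f(c-b))`,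
using `[a, g a] = 0` (the twisted derivation rule at `b = a`). In the cyclic sum of these differences the
double brackets cancel by Jacobi, the terms `f(g b - g a)` and `f(f(c-b))` telescope, and rewriting
`f[b,c]` by the twisted derivation rule cancels everything else against `[a,g b]` and `[a,f(c-b)]`.
-/

section AffineBracket

variable {G : Type*} [LieRing G]

def affineBracket (f g : G →+ G) (s a b : G) : G := ⁅a, b⁆ + g a + f (b - a) + s

variable (f g : G →+ G) (s : G)

theorem lie_map_self_eq_zero (hfg : ∀ a b : G, f ⁅a, b⁆ = ⁅f a, b⁆ + ⁅a, f b⁆ - ⁅a, g b⁆) (x : G) :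
    ⁅x, g x⁆ = 0 := by
  have h := hfg x x
  rw [lie_self, map_zero, ← lie_skew (f x) x, neg_add_cancel, zero_sub] at h
  exact neg_eq_zero.mp h.symm

theorem affineBracket_sub_affineBracket_self {a : G} (ha : ⁅a, g a⁆ = 0) (b c : G) :
    affineBracket f g s a (affineBracket f g s b c) - affineBracket f g s a (affineBracket f g s a a) =
      ⁅a, ⁅b, c⁆⁆ + ⁅a, g b⁆ + ⁅a, f (c - b)⁆ + f ⁅b, c⁆ + f (g b - g a) + f (f (c - b)) := by
  simp only [affineBracket, sub_self, map_zero, add_zero, lie_add, lie_self, lie_zero, ha, map_add, map_sub]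
  abel

theorem affineBracket_affine_jacobi
    (hfg : ∀ a b : G, f ⁅a, b⁆ = ⁅f a, b⁆ + ⁅a, f b⁆ - ⁅a, g b⁆) (a b c : G) :
    affineBracket f g s a (affineBracket f g s b c) - affineBracket f g s a (affineBracket f g s a a) +
      affineBracket f g s b (affineBracket f g s c a) - affineBracket f g s b (affineBracket f g s b b) +
      affineBracket f g s c (affineBracket f g s a b) = affineBracket f g s c (affineBracket f g s c c) := by
  set B := affineBracket f g s
  suffices (B a (B b c) - B a (B a a)) + (B b (B c a) - B b (B b b)) + (B c (B a b) - B c (B c c)) = 0 by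
    rw [← sub_eq_zero, ← this]
    abel
  rw [affineBracket_sub_affineBracket_self f g s (lie_map_self_eq_zero f g hfg a),
    affineBracket_sub_affineBracket_self f g s (lie_map_self_eq_zero f g hfg b),
    affineBracket_sub_affineBracket_self f g s (lie_map_self_eq_zero f g hfg c)]
  simp only [hfg, map_sub, lie_sub]
  rw [← lie_skew (f b) c, ← lie_skew (f c) a, ← lie_skew (f a) b, ← lie_jacobi a b c]
  abel

end AffineBracket

/-- Affine Jacobi identity for the bracket `{a,b} = [a,b] + g(a) + f(b-a) + s`. -/
theorem stmt3 {F G : Type*} [Field F] [LieRing G] [LieAlgebra F G]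
    (f g : G →ₗ[F] G)
    (hfg : ∀ a b : G, f ⁅a, b⁆ = ⁅f a, b⁆ + ⁅a, f b⁆ - ⁅a, g b⁆)
    (s : G) (br : G → G → G)
    (hbr : ∀ a b : G, br a b = ⁅a, b⁆ + g a + f (b - a) + s) :
    ∀ a b c : G, br a (br b c) - br a (br a a) + br b (br c a) - br b (br b b) + br c (br a b) = br c (br c c) := by
  obtain rfl : br = affineBracket f.toAddMonoidHom g.toAddMonoidHom s := funext₂ hbr
  exact affineBracket_affine_jacobi f.toAddMonoidHom g.toAddMonoidHom s hfg
end

section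
/- Let r₃ be the 3-dimensional complex Lie algebra with basis e₁,e₂,e₃ and nonzero brackets [e₁,e₂] = e₂, [e₁,e₃] = e₂ + e₃. If f,g : r₃ → r₃ are linear maps satisfying f([a,b]) = [f(a),b] + [a,f(b)] - [a,g(b)] for all a,b, then there exist complex numbers β₁,...,β₅ such that f(e₁) = β₁e₁ + β₂e₂ + β₃e₃, f(e₂) = β₄e₂, f(e₃) = β₅e₂ + β₄e₃, and g = β₁·id. -/
/-!
Setting `a = c` in the condition, and adding it to its instance with `a` and `c` swapped, gives
`⁅a, g a⁆ = 0` and `⁅a, g c⁆ = ⁅g a, c⁆`; in the structure constants of `r₃` these force `g` to be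
a scalar `t`. Then `f - t` is a Lie derivation, and a derivation `D` of `r₃` maps `e₂ ↦ μ e₂`,
`e₃ ↦ ν e₂ + μ e₃`, while `D e₁` has no `e₁`-component (here `2 ≠ 0` is needed).
-/

section Compatible

variable {R L : Type*} [CommRing R] [LieRing L] [LieAlgebra R L]

def IsCompatiblePair (f g : L →ₗ[R] L) : Prop :=
  ∀ a c : L, f ⁅a, c⁆ = ⁅f a, c⁆ + ⁅a, f c⁆ - ⁅a, g c⁆

namespace IsCompatiblePair

variable {f g : L →ₗ[R] L}

theorem lie_apply_self (h : IsCompatiblePair f g) (a : L) : ⁅a, g a⁆ = 0 := by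
  have := h a a
  rw [lie_self, map_zero] at this
  linear_combination (norm := module) this - lie_skew (f a) a

theorem lie_apply_comm (h : IsCompatiblePair f g) (a c : L) : ⁅a, g c⁆ = ⁅g a, c⁆ := by
  have hac := h a c
  have hca := h c a
  rw [← lie_skew c a, map_neg, ← lie_skew (f c) a, ← lie_skew c (f a), ← lie_skew c (g a)] at hca
  linear_combination (norm := module) hac + hca

def toLieDerivation (h : IsCompatiblePair f g) {t : R} (hg : g = t • LinearMap.id) :
    LieDerivation R L L where
  toLinearMap := f - t • LinearMap.id
  leibniz' a c := by
    have := h a c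
    rw [hg, LinearMap.smul_apply, LinearMap.id_apply, lie_smul] at this
    simp only [LinearMap.sub_apply, LinearMap.smul_apply, LinearMap.id_apply, lie_sub, lie_smul]
    rw [this, ← lie_skew c (f a), ← lie_skew c a]
    module

@[simp]
theorem toLieDerivation_apply (h : IsCompatiblePair f g) {t : R} (hg : g = t • LinearMap.id)
    (x : L) : h.toLieDerivation hg x = f x - t • x :=
  rfl

end IsCompatiblePair

end Compatible

structure IsR3Basis {R L : Type*} [CommRing R] [LieRing L] [LieAlgebra R L]
    (b : Module.Basis (Fin 3) R L) : Prop where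
  lie_zero_one : ⁅b 0, b 1⁆ = b 1
  lie_zero_two : ⁅b 0, b 2⁆ = b 1 + b 2
  lie_one_two : ⁅b 1, b 2⁆ = 0

namespace IsR3Basis

section CommRing

variable {R L : Type*} [CommRing R] [LieRing L] [LieAlgebra R L]
  {b : Module.Basis (Fin 3) R L}

theorem lie_eq (hb : IsR3Basis b) (x y : L) :
    ⁅x, y⁆ = (b.repr x 0 * (b.repr y 1 + b.repr y 2) - b.repr y 0 * (b.repr x 1 + b.repr x 2)) • b 1
      + (b.repr x 0 * b.repr y 2 - b.repr x 2 * b.repr y 0) • b 2 := by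
  have h10 : ⁅b 1, b 0⁆ = -b 1 := by rw [← lie_skew, hb.lie_zero_one]
  have h20 : ⁅b 2, b 0⁆ = -(b 1 + b 2) := by rw [← lie_skew, hb.lie_zero_two]
  have h21 : ⁅b 2, b 1⁆ = 0 := by rw [← lie_skew, hb.lie_one_two, neg_zero]
  conv_lhs => rw [← b.sum_repr x, ← b.sum_repr y]
  simp only [Fin.sum_univ_three, add_lie, lie_add, smul_lie, lie_smul, lie_self, hb.lie_zero_one,
    hb.lie_zero_two, hb.lie_one_two, h10, h20, h21]
  module

theorem repr_lie_zero (hb : IsR3Basis b) (x y : L) : b.repr ⁅x, y⁆ 0 = 0 := by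
  simp [hb.lie_eq]

theorem repr_lie_one (hb : IsR3Basis b) (x y : L) : b.repr ⁅x, y⁆ 1 =
    b.repr x 0 * (b.repr y 1 + b.repr y 2) - b.repr y 0 * (b.repr x 1 + b.repr x 2) := by
  simp [hb.lie_eq]

theorem repr_lie_two (hb : IsR3Basis b) (x y : L) : b.repr ⁅x, y⁆ 2 =
    b.repr x 0 * b.repr y 2 - b.repr x 2 * b.repr y 0 := by
  simp [hb.lie_eq]

theorem eq_smul_id (hb : IsR3Basis b) {g : L →ₗ[R] L} (hself : ∀ a, ⁅a, g a⁆ = 0)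
    (hcomm : ∀ a c, ⁅a, g c⁆ = ⁅g a, c⁆) : g = b.repr (g (b 0)) 0 • LinearMap.id := by
  have h10 : b.repr (g (b 0)) 1 + b.repr (g (b 0)) 2 = 0 := by
    simpa [hb.repr_lie_one] using b.ext_elem_iff.1 (hself (b 0)) 1
  have h20 : b.repr (g (b 0)) 2 = 0 := by
    simpa [hb.repr_lie_two] using b.ext_elem_iff.1 (hself (b 0)) 2
  have h01 : b.repr (g (b 1)) 0 = 0 := by
    simpa [hb.repr_lie_one] using b.ext_elem_iff.1 (hself (b 1)) 1
  have h02 : b.repr (g (b 2)) 0 = 0 := by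
    simpa [hb.repr_lie_one] using b.ext_elem_iff.1 (hself (b 2)) 1
  have h11 : b.repr (g (b 1)) 1 + b.repr (g (b 1)) 2 = b.repr (g (b 0)) 0 := by
    simpa [hb.repr_lie_one] using b.ext_elem_iff.1 (hcomm (b 0) (b 1)) 1
  have h21 : b.repr (g (b 1)) 2 = 0 := by
    simpa [hb.repr_lie_two] using b.ext_elem_iff.1 (hcomm (b 0) (b 1)) 2
  have h12 : b.repr (g (b 2)) 1 + b.repr (g (b 2)) 2 = b.repr (g (b 0)) 0 := by
    simpa [hb.repr_lie_one] using b.ext_elem_iff.1 (hcomm (b 0) (b 2)) 1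
  have h22 : b.repr (g (b 2)) 2 = b.repr (g (b 0)) 0 := by
    simpa [hb.repr_lie_two] using b.ext_elem_iff.1 (hcomm (b 0) (b 2)) 2
  refine b.ext fun i => b.ext_elem_iff.2 fun j => ?_
  fin_cases i <;> fin_cases j <;> simp <;> grind

end CommRing

variable {K L : Type*} [Field K] [NeZero (2 : K)] [LieRing L] [LieAlgebra K L]
  {b : Module.Basis (Fin 3) K L}

theorem derivation_apply_basis (hb : IsR3Basis b) (D : LieDerivation K L L) :
    b.repr (D (b 0)) 0 = 0 ∧ ∃ μ ν : K, D (b 1) = μ • b 1 ∧ D (b 2) = ν • b 1 + μ • b 2 := by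
  have h01 := D.apply_lie_eq_sub (b 0) (b 1)
  have h02 := D.apply_lie_eq_sub (b 0) (b 2)
  rw [hb.lie_zero_one] at h01
  rw [hb.lie_zero_two, map_add] at h02
  have e01 : b.repr (D (b 1)) 0 = 0 := by
    simpa [hb.repr_lie_zero] using b.ext_elem_iff.1 h01 0
  have e11 : b.repr (D (b 1)) 1 =
      b.repr (D (b 1)) 1 + b.repr (D (b 1)) 2 + b.repr (D (b 0)) 0 := by
    simpa [hb.repr_lie_one] using b.ext_elem_iff.1 h01 1
  have e02 : b.repr (D (b 2)) 0 = 0 := by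
    simpa [hb.repr_lie_zero, e01] using b.ext_elem_iff.1 h02 0
  have e12 : b.repr (D (b 1)) 1 + b.repr (D (b 2)) 1 =
      b.repr (D (b 2)) 1 + b.repr (D (b 2)) 2 + b.repr (D (b 0)) 0 := by
    simpa [hb.repr_lie_one] using b.ext_elem_iff.1 h02 1
  have e22 : b.repr (D (b 1)) 2 + b.repr (D (b 2)) 2 =
      b.repr (D (b 2)) 2 + b.repr (D (b 0)) 0 := by
    simpa [hb.repr_lie_two] using b.ext_elem_iff.1 h02 2
  have e00 : b.repr (D (b 0)) 0 = 0 := by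
    have : (2 : K) * b.repr (D (b 0)) 0 = 0 := by linear_combination -e11 - e22
    exact (mul_eq_zero.1 this).resolve_left two_ne_zero
  refine ⟨e00, b.repr (D (b 1)) 1, b.repr (D (b 2)) 1, ?_, ?_⟩ <;>
    refine b.ext_elem_iff.2 fun j => ?_ <;> fin_cases j <;> simp <;> grind

end IsR3Basis

/-- Description of the pairs `(f, g)` satisfying the compatibility condition on
the Lie algebra `r₃`: `[e₁,e₂] = e₂`, `[e₁,e₃] = e₂ + e₃`. -/
theorem stmt7 {L : Type*} [LieRing L] [LieAlgebra ℂ L]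
    (b : Module.Basis (Fin 3) ℂ L)
    (h12 : ⁅b 0, b 1⁆ = b 1) (h13 : ⁅b 0, b 2⁆ = b 1 + b 2)
    (h23 : ⁅b 1, b 2⁆ = 0)
    (f g : L →ₗ[ℂ] L)
    (hfg : ∀ a c : L, f ⁅a, c⁆ = ⁅f a, c⁆ + ⁅a, f c⁆ - ⁅a, g c⁆) :
    ∃ β₁ β₂ β₃ β₄ β₅ : ℂ,
      f (b 0) = β₁ • b 0 + β₂ • b 1 + β₃ • b 2 ∧
      f (b 1) = β₄ • b 1 ∧
      f (b 2) = β₅ • b 1 + β₄ • b 2 ∧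
      ∀ x : L, g x = β₁ • x := by
  have hb : IsR3Basis b := ⟨h12, h13, h23⟩
  have hfg : IsCompatiblePair f g := hfg
  set t := b.repr (g (b 0)) 0
  have hg : g = t • LinearMap.id := hb.eq_smul_id hfg.lie_apply_self hfg.lie_apply_comm
  set D := hfg.toLieDerivation hg
  have hf : ∀ x, f x = t • x + D x := fun x => by simp [D]
  obtain ⟨hD0, μ, ν, hD1, hD2⟩ := hb.derivation_apply_basis D
  refine ⟨t, b.repr (f (b 0)) 1, b.repr (f (b 0)) 2, t + μ, ν,
    ?_, by rw [hf, hD1]; module, by rw [hf, hD2]; module, fun x => by rw [hg]; rfl⟩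
  refine b.ext_elem_iff.2 fun j => ?_
  fin_cases j <;> simp [hf, hD0]
end

section
/- Every Lie algebra automorphism Ψ of the complex Lie algebra r₃ (brackets [e₁,e₂]=e₂, [e₁,e₃]=e₂+e₃) has the form Ψ(e₁) = e₁ + α₁e₂ + α₂e₃, Ψ(e₂) = α₄e₂, Ψ(e₃) = α₃e₂ + α₄e₃ for some α₁,α₂,α₃ ∈ ℂ and α₄ ∈ ℂ*. -/
/-- Every Lie algebra automorphism of `r₃` (`[e₁,e₂]=e₂`, `[e₁,e₃]=e₂+e₃`) has
the form `Ψ(e₁)=e₁+α₁e₂+α₂e₃`, `Ψ(e₂)=α₄e₂`, `Ψ(e₃)=α₃e₂+α₄e₃`, `α₄ ≠ 0`. -/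
theorem stmt9 {L : Type*} [LieRing L] [LieAlgebra ℂ L]
    (b : Module.Basis (Fin 3) ℂ L)
    (h12 : ⁅b 0, b 1⁆ = b 1) (h13 : ⁅b 0, b 2⁆ = b 1 + b 2)
    (h23 : ⁅b 1, b 2⁆ = 0)
    (Ψ : L ≃ₗ[ℂ] L) (hΨ : ∀ x y : L, Ψ ⁅x, y⁆ = ⁅Ψ x, Ψ y⁆) :
    ∃ α₁ α₂ α₃ α₄ : ℂ, α₄ ≠ 0 ∧
      Ψ (b 0) = b 0 + α₁ • b 1 + α₂ • b 2 ∧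
      Ψ (b 1) = α₄ • b 1 ∧
      Ψ (b 2) = α₃ • b 1 + α₄ • b 2 := by
  classical
  have h10 : ⁅b 1, b 0⁆ = -(b 1) := by rw [← lie_skew, h12]
  have h20 : ⁅b 2, b 0⁆ = -(b 1 + b 2) := by rw [← lie_skew, h13]
  have h21 : ⁅b 2, b 1⁆ = 0 := by rw [← lie_skew, h23, neg_zero]
  have hrep : ∀ x : L, x = b.repr x 0 • b 0 + b.repr x 1 • b 1 + b.repr x 2 • b 2 := by
    intro x
    have h := b.sum_repr x
    rw [Fin.sum_univ_three] at h
    exact h.symm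
  have H0 : Ψ (b 0) = b.repr (Ψ (b 0)) 0 • b 0 + b.repr (Ψ (b 0)) 1 • b 1
      + b.repr (Ψ (b 0)) 2 • b 2 := hrep _
  have H1 : Ψ (b 1) = b.repr (Ψ (b 1)) 0 • b 0 + b.repr (Ψ (b 1)) 1 • b 1
      + b.repr (Ψ (b 1)) 2 • b 2 := hrep _
  have H2 : Ψ (b 2) = b.repr (Ψ (b 2)) 0 • b 0 + b.repr (Ψ (b 2)) 1 • b 1
      + b.repr (Ψ (b 2)) 2 • b 2 := hrep _
  have E1 : Ψ (b 1) = ⁅Ψ (b 0), Ψ (b 1)⁆ := by rw [← hΨ, h12]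
  have E2 : Ψ (b 1) + Ψ (b 2) = ⁅Ψ (b 0), Ψ (b 2)⁆ := by
    rw [← hΨ, h13, map_add]
  rw [H1, H0] at E1
  rw [H1, H2, H0] at E2
  simp only [add_lie, lie_add, smul_lie, lie_smul, lie_self, smul_zero, zero_add, add_zero,
    h12, h13, h23, h10, h20, h21, smul_neg, smul_smul, smul_add, neg_add] at E1 E2
  have a0 := congrArg (fun z => b.repr z 0) E1
  have a1 := congrArg (fun z => b.repr z 1) E1
  have a2 := congrArg (fun z => b.repr z 2) E1
  have d0 := congrArg (fun z => b.repr z 0) E2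
  have d1 := congrArg (fun z => b.repr z 1) E2
  have d2 := congrArg (fun z => b.repr z 2) E2
  clear E1 E2
  simp [Finsupp.single_apply] at a0 a1 a2 d0 d1 d2
  set p0 := b.repr (Ψ (b 0)) 0 with hp0
  set p1 := b.repr (Ψ (b 0)) 1 with hp1
  set p2 := b.repr (Ψ (b 0)) 2 with hp2
  set q0 := b.repr (Ψ (b 1)) 0 with hq0
  set q1 := b.repr (Ψ (b 1)) 1 with hq1
  set q2 := b.repr (Ψ (b 1)) 2 with hq2
  set r0 := b.repr (Ψ (b 2)) 0 with hr0
  set r1 := b.repr (Ψ (b 2)) 1 with hr1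
  set r2 := b.repr (Ψ (b 2)) 2 with hr2
  rw [a0] at a1 a2 d0 H1
  rw [zero_add] at d0
  rw [d0] at d1 d2 H2
  simp only [zero_mul, mul_zero, neg_zero, zero_add, add_zero, zero_smul] at a1 a2 d1 d2 H1 H2
  have hq2 : q2 = 0 := by
    by_contra h
    have hp : (1 : ℂ) = p0 := mul_left_cancel₀ h (by rw [mul_one]; exact a2)
    rw [← hp, mul_one] at d2
    exact h (by linear_combination d2)
  rw [hq2] at a1 d2 H1
  simp only [zero_mul, zero_add, add_zero, zero_smul] at a1 d2 H1
  have hq1 : q1 ≠ 0 := by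
    intro h
    rw [h, zero_smul] at H1
    exact b.ne_zero 1 (Ψ.injective (by rw [H1, map_zero]))
  have hp : (1 : ℂ) = p0 := mul_left_cancel₀ hq1 (by rw [mul_one]; exact a1)
  rw [← hp, mul_one, mul_one] at d1
  have hr2 : r2 = q1 := by linear_combination -d1
  refine ⟨p1, p2, r1, q1, hq1, ?_, H1, ?_⟩
  · rw [H0, ← hp, one_smul]
  · rw [H2, hr2]
end

section
/- Let r₃(1) be the complex Lie algebra with basis e₁,e₂,e₃ and nonzero brackets [e₁,e₂]=e₂, [e₁,e₃]=e₃. If f,g : r₃(1) → r₃(1) are linear maps satisfying f([a,b]) = [f(a),b] + [a,f(b)] - [a,g(b)] for all a,b, then there exist β₁,...,β₇ ∈ ℂ such that f(e₁)=β₁e₁+β₂e₂+β₃e₃, f(e₂)=β₄e₂+β₆e₃, f(e₃)=β₇e₂+β₅e₃, and g = β₁·id. -/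
/-!
Writing `φ` for the first coordinate, the bracket of `r₃(1)` is `⁅x, y⁆ = φ x • y - φ y • x`.
Substituting this into the compatibility condition collapses it to
`φ a • g c = φ (f a) • c + (φ (g c) - φ (f c)) • a`. Applying `φ` gives `φ ∘ f = φ (f e₁) • φ`,
so `f e₂, f e₃` have no `e₁`-component; taking `a = e₂ ∈ ker φ` forces `φ ∘ g = φ ∘ f`, and then
`a = e₁` gives `g = φ (f e₁) • id`.
-/

namespace LieAlgebra

variable {R L : Type*} [CommRing R] [LieRing L] [LieAlgebra R L]
  {φ : L →ₗ[R] R} (hφ : ∀ x y : L, ⁅x, y⁆ = φ x • y - φ y • x)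
  {f g : L →ₗ[R] L} (hfg : ∀ a c : L, f ⁅a, c⁆ = ⁅f a, c⁆ + ⁅a, f c⁆ - ⁅a, g c⁆)
include hφ hfg

theorem smul_apply_eq_of_lie_eq_smul_sub_smul (a c : L) :
    φ a • g c = φ (f a) • c + (φ (g c) - φ (f c)) • a := by
  have h := hfg a c
  simp only [hφ, map_sub, map_smul] at h
  linear_combination (norm := module) h

theorem apply_apply_eq_mul_of_lie_eq_smul_sub_smul {e : L} (he : φ e = 1) (a : L) :
    φ (f a) = φ (f e) * φ a := by
  have h := congrArg φ (smul_apply_eq_of_lie_eq_smul_sub_smul hφ hfg a e)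
  simp only [map_add, map_smul, he, smul_eq_mul] at h
  linear_combination -h

theorem apply_eq_smul_of_lie_eq_smul_sub_smul [IsDomain R] [Module.IsTorsionFree R L]
    {e u : L} (he : φ e = 1) (hu : φ u = 0) (hu₀ : u ≠ 0) (c : L) :
    g c = φ (f e) • c := by
  have hfu : φ (f u) = 0 := by
    rw [apply_apply_eq_mul_of_lie_eq_smul_sub_smul hφ hfg he, hu, mul_zero]
  have hgc : φ (g c) = φ (f c) := by
    have h := smul_apply_eq_of_lie_eq_smul_sub_smul hφ hfg u c
    rw [hu, hfu, zero_smul, zero_smul, zero_add, eq_comm, smul_eq_zero_iff_left hu₀] at h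
    exact sub_eq_zero.mp h
  simpa [he, hgc] using smul_apply_eq_of_lie_eq_smul_sub_smul hφ hfg e c

end LieAlgebra

theorem lie_eq_coord_zero_smul_sub_smul {R L : Type*} [CommRing R] [LieRing L] [LieAlgebra R L]
    (b : Module.Basis (Fin 3) R L)
    (h12 : ⁅b 0, b 1⁆ = b 1) (h13 : ⁅b 0, b 2⁆ = b 2) (h23 : ⁅b 1, b 2⁆ = 0) (x y : L) :
    ⁅x, y⁆ = b.coord 0 x • y - b.coord 0 y • x := by
  let B : L →ₗ[R] L →ₗ[R] L := LinearMap.mk₂ R (fun x y => b.coord 0 x • y - b.coord 0 y • x)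
    (by intros; simp only [map_add]; module) (by intros; simp only [map_smul]; module)
    (by intros; simp only [map_add]; module) (by intros; simp only [map_smul]; module)
  have hB : (LieAlgebra.ad R L : L →ₗ[R] Module.End R L) = B := by
    refine LinearMap.ext_basis b b fun i j => ?_
    fin_cases i <;> fin_cases j <;> simp [B, h12, h13, h23, ← lie_skew]
  exact LinearMap.congr_fun₂ hB x y

/-- Description of the pairs `(f, g)` satisfying the compatibility condition on
`r₃(1)`: `[e₁,e₂]=e₂`, `[e₁,e₃]=e₃`. -/
theorem stmt11 {L : Type*} [LieRing L] [LieAlgebra ℂ L]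
    (b : Module.Basis (Fin 3) ℂ L)
    (h12 : ⁅b 0, b 1⁆ = b 1) (h13 : ⁅b 0, b 2⁆ = b 2)
    (h23 : ⁅b 1, b 2⁆ = 0)
    (f g : L →ₗ[ℂ] L)
    (hfg : ∀ a c : L, f ⁅a, c⁆ = ⁅f a, c⁆ + ⁅a, f c⁆ - ⁅a, g c⁆) :
    ∃ β₁ β₂ β₃ β₄ β₅ β₆ β₇ : ℂ,
      f (b 0) = β₁ • b 0 + β₂ • b 1 + β₃ • b 2 ∧
      f (b 1) = β₄ • b 1 + β₆ • b 2 ∧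
      f (b 2) = β₇ • b 1 + β₅ • b 2 ∧
      ∀ x : L, g x = β₁ • x := by
  have hφ := lie_eq_coord_zero_smul_sub_smul b h12 h13 h23
  have he : b.coord 0 (b 0) = 1 := by simp
  have hf_coord : ∀ i, i ≠ 0 → b.coord 0 (f (b i)) = 0 := fun i hi => by
    rw [LieAlgebra.apply_apply_eq_mul_of_lie_eq_smul_sub_smul hφ hfg he]
    simp [hi]
  have hexp (x : L) : x = b.coord 0 x • b 0 + b.coord 1 x • b 1 + b.coord 2 x • b 2 :=
    (b.sum_repr x).symm.trans (Fin.sum_univ_three _)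
  refine ⟨b.coord 0 (f (b 0)), b.coord 1 (f (b 0)), b.coord 2 (f (b 0)), b.coord 1 (f (b 1)),
    b.coord 2 (f (b 2)), b.coord 2 (f (b 1)), b.coord 1 (f (b 2)), hexp _, ?_, ?_,
    LieAlgebra.apply_eq_smul_of_lie_eq_smul_sub_smul hφ hfg he (u := b 1) (by simp) (b.ne_zero 1)⟩
  · refine (hexp _).trans ?_
    rw [hf_coord 1 (by decide), zero_smul, zero_add]
  · refine (hexp _).trans ?_
    rw [hf_coord 2 (by decide), zero_smul, zero_add]
end

section
/- Let r₂ ⊕ ℂ be the complex Lie algebra with basis e₁,e₂,e₃ and single nonzero bracket [e₁,e₂]=e₂. If f,g : r₂⊕ℂ → r₂⊕ℂ are linear maps satisfying f([a,b]) = [f(a),b] + [a,f(b)] - [a,g(b)] for all a,b, then there exist β₁,...,β₅, γ₁,γ₂,γ₃ ∈ ℂ with f(e₁)=β₁e₁+β₂e₂+β₃e₃, f(e₂)=β₄e₂, f(e₃)=β₅e₃, g(e₁)=β₁e₁+γ₁e₃, g(e₂)=β₁e₂+γ₂e₃, g(e₃)=γ₃e₃. -/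
/-!
In coordinates with respect to `b`, the bracket is `⁅x, y⁆ = (x₀ y₁ - x₁ y₀) • b 1`. Writing the
compatibility condition for pairs of basis vectors and reading off the `b 1`-coordinate
gives linear equations between the matrix entries of `f` and `g`, which force the stated shape.
-/

namespace Module.Basis

variable {R M : Type*} [CommRing R] [AddCommGroup M] [Module R M]

theorem eq_fin_three (b : Basis (Fin 3) R M) (x : M) :
    x = b.repr x 0 • b 0 + b.repr x 1 • b 1 + b.repr x 2 • b 2 := by
  conv_lhs => rw [← b.sum_repr x]
  rw [Fin.sum_univ_three]

end Module.Basis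

section

variable {R L : Type*} [CommRing R] [LieRing L] [LieAlgebra R L] {b : Module.Basis (Fin 3) R L}

theorem lie_eq_smul_basis_one (h12 : ⁅b 0, b 1⁆ = b 1) (h13 : ⁅b 0, b 2⁆ = 0)
    (h23 : ⁅b 1, b 2⁆ = 0) (x y : L) :
    ⁅x, y⁆ = (b.repr x 0 * b.repr y 1 - b.repr x 1 * b.repr y 0) • b 1 := by
  have h21 : ⁅b 1, b 0⁆ = -b 1 := by rw [← lie_skew, h12]
  have h31 : ⁅b 2, b 0⁆ = 0 := by rw [← lie_skew, h13, neg_zero]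
  have h32 : ⁅b 2, b 1⁆ = 0 := by rw [← lie_skew, h23, neg_zero]
  conv_lhs => rw [b.eq_fin_three x, b.eq_fin_three y]
  simp only [lie_add, add_lie, lie_smul, smul_lie, lie_self, h12, h13, h23, h21, h31, h32]
  module

theorem smul_map_basis_one_eq_of_compat (h12 : ⁅b 0, b 1⁆ = b 1) (h13 : ⁅b 0, b 2⁆ = 0)
    (h23 : ⁅b 1, b 2⁆ = 0) {f g : L →ₗ[R] L}
    (hfg : ∀ a c : L, f ⁅a, c⁆ = ⁅f a, c⁆ + ⁅a, f c⁆ - ⁅a, g c⁆) (x y : L) :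
    (b.repr x 0 * b.repr y 1 - b.repr x 1 * b.repr y 0) • f (b 1) =
      (b.repr (f x) 0 * b.repr y 1 - b.repr (f x) 1 * b.repr y 0 +
        b.repr x 0 * b.repr ((f - g) y) 1 - b.repr x 1 * b.repr ((f - g) y) 0) • b 1 := by
  have h := hfg x y
  simp only [lie_eq_smul_basis_one h12 h13 h23, map_smul] at h
  rw [h, LinearMap.sub_apply, map_sub, Finsupp.sub_apply, Finsupp.sub_apply]
  module

end

/-- Description of the pairs `(f, g)` satisfying the compatibility condition on
`r₂ ⊕ ℂ`: single nonzero bracket `[e₁,e₂]=e₂`. -/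
theorem stmt13 {L : Type*} [LieRing L] [LieAlgebra ℂ L]
    (b : Module.Basis (Fin 3) ℂ L)
    (h12 : ⁅b 0, b 1⁆ = b 1) (h13 : ⁅b 0, b 2⁆ = 0)
    (h23 : ⁅b 1, b 2⁆ = 0)
    (f g : L →ₗ[ℂ] L)
    (hfg : ∀ a c : L, f ⁅a, c⁆ = ⁅f a, c⁆ + ⁅a, f c⁆ - ⁅a, g c⁆) :
    ∃ β₁ β₂ β₃ β₄ β₅ γ₁ γ₂ γ₃ : ℂ,
      f (b 0) = β₁ • b 0 + β₂ • b 1 + β₃ • b 2 ∧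
      f (b 1) = β₄ • b 1 ∧
      f (b 2) = β₅ • b 2 ∧
      g (b 0) = β₁ • b 0 + γ₁ • b 2 ∧
      g (b 1) = β₁ • b 1 + γ₂ • b 2 ∧
      g (b 2) = γ₃ • b 2 := by
  have key (j k : Fin 3) :=
    congrArg (b.repr · 1) (smul_map_basis_one_eq_of_compat h12 h13 h23 hfg (b j) (b k))
  have hG11 : b.repr (g (b 1)) 1 = b.repr (f (b 0)) 0 := by
    linear_combination (norm := (simp; ring)) key 0 1
  have hG00 : b.repr (g (b 0)) 0 = b.repr (f (b 0)) 0 := by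
    linear_combination (norm := (simp; ring)) -key 1 0
  have hG10 : b.repr (g (b 0)) 1 = 0 := by linear_combination (norm := (simp; ring)) key 0 0
  have hG01 : b.repr (g (b 1)) 0 = 0 := by linear_combination (norm := simp) -key 1 1
  have hF02 : b.repr (f (b 2)) 0 = 0 := by linear_combination (norm := simp) -key 2 1
  have hF12 : b.repr (f (b 2)) 1 = 0 := by linear_combination (norm := simp) key 2 0
  have hG02 : b.repr (g (b 2)) 0 = 0 := by
    linear_combination (norm := simp) hF02 - key 1 2
  have hG12 : b.repr (g (b 2)) 1 = 0 := by
    linear_combination (norm := simp) hF12 + key 0 2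
  refine ⟨b.repr (f (b 0)) 0, b.repr (f (b 0)) 1, b.repr (f (b 0)) 2, b.repr (f (b 1)) 1,
    b.repr (f (b 2)) 2, b.repr (g (b 0)) 2, b.repr (g (b 1)) 2, b.repr (g (b 2)) 2,
    b.eq_fin_three (f (b 0)), ?_, ?_, ?_, ?_, ?_⟩
  · simpa [hG11] using smul_map_basis_one_eq_of_compat h12 h13 h23 hfg (b 0) (b 1)
  · simpa [hF02, hF12] using b.eq_fin_three (f (b 2))
  · simpa [hG00, hG10] using b.eq_fin_three (g (b 0))
  · simpa [hG01, hG11] using b.eq_fin_three (g (b 1))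
  · simpa [hG02, hG12] using b.eq_fin_three (g (b 2))
end

section
/- Every Lie algebra automorphism Ψ of the complex Lie algebra r₂ ⊕ ℂ (single nonzero bracket [e₁,e₂]=e₂) has the form Ψ(e₁) = e₁ + α₁e₂ + α₂e₃, Ψ(e₂) = α₃e₂, Ψ(e₃) = α₄e₃ for some α₁,α₂ ∈ ℂ and α₃,α₄ ∈ ℂ*. -/
/-!
Every bracket lands on the line `K e₂`, with coefficient the `2 × 2` minor of the first two
coordinates; the centre is `K e₃`. An automorphism preserves the centre, so `Ψ e₃ ∈ K e₃`, and
`Ψ e₂ = ⁅Ψ e₁, Ψ e₂⁆ ∈ K e₂`. Writing `Ψ e₂ = c e₂` with `c ≠ 0`, the same identity reads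
`c e₂ = c a e₂`, where `a` is the `e₁`-coordinate of `Ψ e₁`, so `a = 1`.
-/

open Module

theorem lie_eq_zero_of_map_of_forall_lie_eq_zero {R L : Type*} [CommRing R] [LieRing L]
    [LieAlgebra R L] (Ψ : L ≃ₗ[R] L) (hΨ : ∀ x y : L, Ψ ⁅x, y⁆ = ⁅Ψ x, Ψ y⁆) {z : L}
    (hz : ∀ y : L, ⁅z, y⁆ = 0) (y : L) : ⁅Ψ z, y⁆ = 0 := by
  rw [← Ψ.apply_symm_apply y, ← hΨ, hz, map_zero]

theorem ne_zero_of_map_eq_smul {R V : Type*} [Semiring R] [AddCommMonoid V] [Module R V]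
    (Ψ : V ≃ₗ[R] V) {v : V} (hv : v ≠ 0) {c : R} (h : Ψ v = c • v) : c ≠ 0 := by
  rintro rfl
  exact hv (Ψ.map_eq_zero_iff.mp (by rw [h, zero_smul]))

section Basis

variable {K L : Type*} [Field K] [LieRing L] [LieAlgebra K L] (b : Basis (Fin 3) K L)
  (h12 : ⁅b 0, b 1⁆ = b 1) (h13 : ⁅b 0, b 2⁆ = 0) (h23 : ⁅b 1, b 2⁆ = 0)
include h12 h13 h23

theorem lie_eq_minor_smul (x y : L) :
    ⁅x, y⁆ = (b.repr x 0 * b.repr y 1 - b.repr x 1 * b.repr y 0) • b 1 := by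
  have h21 : ⁅b 1, b 0⁆ = -b 1 := by rw [← lie_skew, h12]
  have h31 : ⁅b 2, b 0⁆ = 0 := by rw [← lie_skew, h13, neg_zero]
  have h32 : ⁅b 2, b 1⁆ = 0 := by rw [← lie_skew, h23, neg_zero]
  conv_lhs => rw [← b.sum_repr x, ← b.sum_repr y]
  simp only [Fin.sum_univ_three, add_lie, lie_add, smul_lie, lie_smul, h12, h13, h23, h21,
    h31, h32, lie_self, smul_zero, smul_neg, add_zero, zero_add]
  module

theorem lie_basis_two_eq_zero (y : L) : ⁅b 2, y⁆ = 0 := by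
  simp [lie_eq_minor_smul b h12 h13 h23]

theorem eq_repr_smul_of_forall_lie_eq_zero {z : L} (hz : ∀ y : L, ⁅z, y⁆ = 0) :
    z = b.repr z 2 • b 2 := by
  have hb1 : b 1 ≠ 0 := b.ne_zero 1
  have hz0 : b.repr z 0 = 0 := by
    simpa [lie_eq_minor_smul b h12 h13 h23, hb1] using hz (b 1)
  have hz1 : b.repr z 1 = 0 := by
    simpa [lie_eq_minor_smul b h12 h13 h23, hb1] using hz (b 0)
  conv_lhs => rw [← b.sum_repr z, Fin.sum_univ_three, hz0, hz1]
  simp only [zero_smul, zero_add]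

end Basis

/-- Every Lie algebra automorphism of `r₂ ⊕ ℂ` (single nonzero bracket
`[e₁,e₂]=e₂`) has the form `Ψ(e₁)=e₁+α₁e₂+α₂e₃`, `Ψ(e₂)=α₃e₂`,
`Ψ(e₃)=α₄e₃` with `α₃, α₄ ≠ 0`. -/
theorem stmt14 {L : Type*} [LieRing L] [LieAlgebra ℂ L]
    (b : Module.Basis (Fin 3) ℂ L)
    (h12 : ⁅b 0, b 1⁆ = b 1) (h13 : ⁅b 0, b 2⁆ = 0)
    (h23 : ⁅b 1, b 2⁆ = 0)
    (Ψ : L ≃ₗ[ℂ] L) (hΨ : ∀ x y : L, Ψ ⁅x, y⁆ = ⁅Ψ x, Ψ y⁆) :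
    ∃ α₁ α₂ α₃ α₄ : ℂ, α₃ ≠ 0 ∧ α₄ ≠ 0 ∧
      Ψ (b 0) = b 0 + α₁ • b 1 + α₂ • b 2 ∧
      Ψ (b 1) = α₃ • b 1 ∧
      Ψ (b 2) = α₄ • b 2 := by
  have hbr := lie_eq_minor_smul b h12 h13 h23
  set a := b.repr (Ψ (b 0))
  set c := a 0 * b.repr (Ψ (b 1)) 1 - a 1 * b.repr (Ψ (b 1)) 0
  have hΨ1 : Ψ (b 1) = c • b 1 := by rw [← hbr, ← hΨ, h12]
  have hc : c ≠ 0 := ne_zero_of_map_eq_smul Ψ (b.ne_zero 1) hΨ1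
  have ha0 : a 0 = 1 := by
    have h : c • b 1 = (a 0 * c) • b 1 :=
      calc c • b 1 = ⁅Ψ (b 0), Ψ (b 1)⁆ := by rw [← hΨ, h12, hΨ1]
        _ = (a 0 * c) • b 1 := by rw [hΨ1, hbr]; simp [a]
    have := smul_left_injective ℂ (b.ne_zero 1) h
    exact (mul_eq_right₀ hc).mp this.symm
  have hΨ2 := eq_repr_smul_of_forall_lie_eq_zero b h12 h13 h23
    (lie_eq_zero_of_map_of_forall_lie_eq_zero Ψ hΨ (lie_basis_two_eq_zero b h12 h13 h23))
  refine ⟨a 1, a 2, c, _, hc, ne_zero_of_map_eq_smul Ψ (b.ne_zero 2) hΨ2, ?_, hΨ1, hΨ2⟩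
  rw [← b.sum_repr (Ψ (b 0)), Fin.sum_univ_three]
  simp [a, ha0]
end
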